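/- Rényi's second characterization of maximal correlation: for finitely supported random variables X, Y, ρ_m(X;Y) = sup over f:𝒳→ℝ with E[f(X)]=0, E[f(X)²]=1 of √(E[(E[f(X)|Y])²]). -/

import Mathlib

open BigOperators Finset
open scoped Classical

/-- Hirschfeld–Gebelein–Rényi maximal correlation of a joint pmf `p` on `X × Y`:
the supremum of `E[f(X) g(Y)]` over zero-mean, unit-second-moment `f`, `g`
(`sSup ∅ = 0` if no such functions exist). -/
noncomputable def maxCorr {X Y : Type*} [Fintype X] [Fintype Y] (p : X → Y → ℝ) : ℝ :=
  sSup {r : ℝ | ∃ f : X → ℝ, ∃ g : Y → ℝ,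
    (∑ x, ∑ y, p x y * f x) = 0 ∧
    (∑ x, ∑ y, p x y * g y) = 0 ∧
    (∑ x, ∑ y, p x y * (f x) ^ 2) = 1 ∧
    (∑ x, ∑ y, p x y * (g y) ^ 2) = 1 ∧
    r = ∑ x, ∑ y, p x y * f x * g y}

/-- Spectral (operator) norm of a real matrix. -/
noncomputable def specNorm {X Y : Type*} [Fintype X] [Fintype Y] (B : Matrix X Y ℝ) : ℝ :=
  sSup {r : ℝ | ∃ v : Y → ℝ, (∑ y, (v y) ^ 2) = 1 ∧
    r = Real.sqrt (∑ x, (B.mulVec v x) ^ 2)}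

/-!
For `f` centred with `E[f(X)²] = 1` and any admissible `g`, the tower property gives
`E[f(X) g(Y)] = E[E[f(X)|Y] g(Y)] ≤ ‖E[f(X)|Y]‖₂` by Cauchy–Schwarz, and `‖E[f(X)|Y]‖₂ ≤ 1` by
Jensen. Equality is attained by `g = E[f(X)|Y] / ‖E[f(X)|Y]‖₂`, which is centred because
`E[E[f(X)|Y]] = E[f(X)] = 0`; when `E[f(X)|Y] = 0` the value `0` is still dominated, since the
set of correlations is symmetric under `g ↦ -g`.
-/

theorem Real.sSup_eq_sSup_of_forall_exists_le {S T : Set ℝ} (hT : BddAbove T)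
    (hT_nonneg : ∀ b ∈ T, 0 ≤ b) (hS_neg : ∀ a ∈ S, -a ∈ S) (hST : ∀ a ∈ S, ∃ b ∈ T, a ≤ b)
    (hTS : ∀ b ∈ T, 0 < b → b ∈ S) :
    sSup S = sSup T := by
  obtain ⟨u, hu⟩ := hT
  have hS : BddAbove S := ⟨u, fun a ha => by
    obtain ⟨b, hb, hab⟩ := hST a ha
    exact hab.trans (hu hb)⟩
  have hS_nonneg : 0 ≤ sSup S := by
    rcases S.eq_empty_or_nonempty with rfl | ⟨a, ha⟩
    · simp
    · linarith [le_csSup hS ha, le_csSup hS (hS_neg a ha)]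
  apply le_antisymm
  · refine Real.sSup_le (fun a ha => ?_) (Real.sSup_nonneg hT_nonneg)
    obtain ⟨b, hb, hab⟩ := hST a ha
    exact hab.trans (le_csSup ⟨u, hu⟩ hb)
  · refine Real.sSup_le (fun b hb => ?_) hS_nonneg
    rcases (hT_nonneg b hb).eq_or_lt with rfl | hb_pos
    · exact hS_nonneg
    · exact le_csSup hS (hTS b hb hb_pos)

theorem Finset.sq_sum_mul_mul_le {ι : Type*} (s : Finset ι) {w : ι → ℝ}
    (hw : ∀ i ∈ s, 0 ≤ w i) (a b : ι → ℝ) :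
    (∑ i ∈ s, w i * (a i * b i)) ^ 2 ≤ (∑ i ∈ s, w i * a i ^ 2) * ∑ i ∈ s, w i * b i ^ 2 :=
  sum_sq_le_sum_mul_sum_of_sq_le_mul s (fun i hi => mul_nonneg (hw i hi) (sq_nonneg _))
    (fun i hi => mul_nonneg (hw i hi) (sq_nonneg _)) (fun i _ => le_of_eq (by ring))

namespace MaximalCorrelation

variable {X Y : Type*} [Fintype X] [Fintype Y] {p : X → Y → ℝ}

/-- `E[f(X) | Y = y]`; it is `0` where `P(Y = y) = 0`. -/
noncomputable def condExp (p : X → Y → ℝ) (f : X → ℝ) (y : Y) : ℝ :=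
  (∑ x, p x y * f x) / ∑ x, p x y

noncomputable def condExpNorm (p : X → Y → ℝ) (f : X → ℝ) : ℝ :=
  √(∑ y, (∑ x, p x y) * condExp p f y ^ 2)

theorem sum_sum_mul_left (f : X → ℝ) :
    ∑ x, ∑ y, p x y * f x = ∑ x, (∑ y, p x y) * f x := by
  simp only [Finset.sum_mul]

theorem sum_sum_mul_right (g : Y → ℝ) :
    ∑ x, ∑ y, p x y * g y = ∑ y, (∑ x, p x y) * g y := by
  rw [Finset.sum_comm]
  simp only [Finset.sum_mul]

omit [Fintype Y] in
theorem sum_mul_condExp {y : Y} (hp : ∀ x, 0 ≤ p x y) (f : X → ℝ) :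
    (∑ x, p x y) * condExp p f y = ∑ x, p x y * f x := by
  rcases (Finset.sum_nonneg fun x _ => hp x).eq_or_lt with h | h
  · have hp0 : ∀ x, p x y = 0 := fun x =>
      (Finset.sum_eq_zero_iff_of_nonneg fun x _ => hp x).1 h.symm x (Finset.mem_univ x)
    simp [hp0]
  · exact mul_div_cancel₀ _ h.ne'

omit [Fintype Y] in
theorem sum_mul_sq_condExp_le {y : Y} (hp : ∀ x, 0 ≤ p x y) (f : X → ℝ) :
    (∑ x, p x y) * condExp p f y ^ 2 ≤ ∑ x, p x y * f x ^ 2 := by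
  have hq : 0 ≤ ∑ x, p x y := Finset.sum_nonneg fun x _ => hp x
  have hcs : (∑ x, p x y * f x) ^ 2 ≤ (∑ x, p x y) * ∑ x, p x y * f x ^ 2 :=
    Finset.sum_sq_le_sum_mul_sum_of_sq_le_mul _ (fun x _ => hp x)
      (fun x _ => mul_nonneg (hp x) (sq_nonneg _)) (fun x _ => le_of_eq (by ring))
  calc (∑ x, p x y) * condExp p f y ^ 2 = (∑ x, p x y * f x) ^ 2 / ∑ x, p x y := by
        rw [← sum_mul_condExp hp]; field_simp
    _ ≤ ∑ x, p x y * f x ^ 2 :=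
        div_le_of_le_mul₀ hq (Finset.sum_nonneg fun x _ => mul_nonneg (hp x) (sq_nonneg _))
          (by linarith)

theorem sum_sum_mul_mul_eq_sum_condExp_mul (hp : ∀ x y, 0 ≤ p x y) (f : X → ℝ) (g : Y → ℝ) :
    ∑ x, ∑ y, p x y * f x * g y = ∑ y, (∑ x, p x y) * (condExp p f y * g y) := by
  rw [Finset.sum_comm]
  refine Finset.sum_congr rfl fun y _ => ?_
  rw [← mul_assoc, sum_mul_condExp (hp · y), Finset.sum_mul]

theorem sum_mul_condExp_eq (hp : ∀ x y, 0 ≤ p x y) (f : X → ℝ) :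
    ∑ y, (∑ x, p x y) * condExp p f y = ∑ x, (∑ y, p x y) * f x := by
  rw [Finset.sum_congr rfl fun y _ => sum_mul_condExp (hp · y) f, Finset.sum_comm,
    sum_sum_mul_left]

theorem sq_condExpNorm (hp : ∀ x y, 0 ≤ p x y) (f : X → ℝ) :
    condExpNorm p f ^ 2 = ∑ y, (∑ x, p x y) * condExp p f y ^ 2 :=
  Real.sq_sqrt <| Finset.sum_nonneg fun y _ =>
    mul_nonneg (Finset.sum_nonneg fun x _ => hp x y) (sq_nonneg _)

theorem condExpNorm_le (hp : ∀ x y, 0 ≤ p x y) (f : X → ℝ) :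
    condExpNorm p f ≤ √(∑ x, (∑ y, p x y) * f x ^ 2) := by
  refine Real.sqrt_le_sqrt ?_
  calc ∑ y, (∑ x, p x y) * condExp p f y ^ 2 ≤ ∑ y, ∑ x, p x y * f x ^ 2 :=
        Finset.sum_le_sum fun y _ => sum_mul_sq_condExp_le (hp · y) f
    _ = ∑ x, (∑ y, p x y) * f x ^ 2 := by rw [Finset.sum_comm, sum_sum_mul_left]

theorem sum_sum_mul_mul_le_condExpNorm (hp : ∀ x y, 0 ≤ p x y) (f : X → ℝ) {g : Y → ℝ}
    (hg : ∑ y, (∑ x, p x y) * g y ^ 2 = 1) :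
    ∑ x, ∑ y, p x y * f x * g y ≤ condExpNorm p f := by
  rw [sum_sum_mul_mul_eq_sum_condExp_mul hp]
  refine (le_abs_self _).trans (Real.abs_le_sqrt ?_)
  have hcs := Finset.sq_sum_mul_mul_le Finset.univ (w := fun y => ∑ x, p x y)
    (fun y _ => Finset.sum_nonneg fun x _ => hp x y) (condExp p f) g
  rwa [hg, mul_one] at hcs

/-- The normalised conditional expectation attains the correlation `condExpNorm p f`. -/
theorem exists_sum_sum_mul_mul_eq_condExpNorm (hp : ∀ x y, 0 ≤ p x y) {f : X → ℝ}
    (hf : ∑ x, (∑ y, p x y) * f x = 0) (hpos : 0 < condExpNorm p f) :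
    ∃ g : Y → ℝ, ∑ y, (∑ x, p x y) * g y = 0 ∧ ∑ y, (∑ x, p x y) * g y ^ 2 = 1 ∧
      ∑ x, ∑ y, p x y * f x * g y = condExpNorm p f := by
  set N := condExpNorm p f
  have hN : N ^ 2 = ∑ y, (∑ x, p x y) * condExp p f y ^ 2 := sq_condExpNorm hp f
  refine ⟨fun y => condExp p f y / N, ?_, ?_, ?_⟩
  · simp_rw [mul_div_assoc', ← Finset.sum_div, sum_mul_condExp_eq hp, hf, zero_div]
  · simp_rw [div_pow, mul_div_assoc', ← Finset.sum_div, ← hN]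
    exact div_self (pow_pos hpos 2).ne'
  · calc ∑ x, ∑ y, p x y * f x * (condExp p f y / N)
          = (∑ y, (∑ x, p x y) * condExp p f y ^ 2) / N := by
            rw [sum_sum_mul_mul_eq_sum_condExp_mul hp, Finset.sum_div]
            exact Finset.sum_congr rfl fun y _ => by ring
      _ = N := by rw [← hN, sq, mul_div_cancel_right₀ _ hpos.ne']

end MaximalCorrelation

open MaximalCorrelation in
theorem stmt9_general {X Y : Type*} [Fintype X] [Fintype Y]
    (p : X → Y → ℝ) (hp : ∀ x y, 0 ≤ p x y) :
    maxCorr p = sSup {r : ℝ | ∃ f : X → ℝ,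
      (∑ x, (∑ y, p x y) * f x) = 0 ∧
      (∑ x, (∑ y, p x y) * (f x) ^ 2) = 1 ∧
      r = Real.sqrt (∑ y, (∑ x, p x y) *
        ((∑ x, p x y * f x) / (∑ x, p x y)) ^ 2)} := by
  refine Real.sSup_eq_sSup_of_forall_exists_le ⟨1, ?_⟩ ?_ ?_ ?_ ?_
  · rintro _ ⟨f, -, hf2, rfl⟩
    exact (condExpNorm_le hp f).trans_eq (by rw [hf2, Real.sqrt_one])
  · rintro _ ⟨f, -, -, rfl⟩
    exact Real.sqrt_nonneg _
  · rintro _ ⟨f, g, hf, hg, hf2, hg2, rfl⟩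
    exact ⟨f, -g, hf, by simpa using hg, hf2, by simpa using hg2, by simp⟩
  · rintro _ ⟨f, g, hf, -, hf2, hg2, rfl⟩
    rw [sum_sum_mul_left] at hf hf2
    rw [sum_sum_mul_right] at hg2
    exact ⟨_, ⟨f, hf, hf2, rfl⟩, sum_sum_mul_mul_le_condExpNorm hp f hg2⟩
  · rintro _ ⟨f, hf, hf2, rfl⟩ hpos
    obtain ⟨g, hg, hg2, hfg⟩ := exists_sum_sum_mul_mul_eq_condExpNorm hp hf hpos
    rw [← sum_sum_mul_left] at hf hf2
    rw [← sum_sum_mul_right] at hg hg2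
    exact ⟨f, g, hf, hg, hf2, hg2, hfg.symm⟩

theorem stmt9 {X Y : Type*} [Fintype X] [Fintype Y]
    (p : X → Y → ℝ) (hp : ∀ x y, 0 ≤ p x y) (hsum : ∑ x, ∑ y, p x y = 1)
    (hX : ∀ x, 0 < ∑ y, p x y) (hY : ∀ y, 0 < ∑ x, p x y) :
    maxCorr p = sSup {r : ℝ | ∃ f : X → ℝ,
      (∑ x, (∑ y, p x y) * f x) = 0 ∧
      (∑ x, (∑ y, p x y) * (f x) ^ 2) = 1 ∧
      r = Real.sqrt (∑ y, (∑ x, p x y) *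
        ((∑ x, p x y * f x) / (∑ x, p x y)) ^ 2)} :=
  stmt9_general p hp
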